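/- On a nondegenerate triangle T with edges e₁, e₂, e₃, unit outward normals nᵢ and unit tangents tᵢ, the constant symmetric matrices Ψᵢ = (tᵢ₊₁ tᵢ₋₁ᵀ + tᵢ₋₁ tᵢ₊₁ᵀ) / (2 (nᵢᵀ tᵢ₋₁)(nᵢᵀ tᵢ₊₁)) (indices mod 3) satisfy the duality relations (Ψᵢ)_{nⱼ nⱼ} := nⱼᵀ Ψᵢ nⱼ = δᵢⱼ; hence {Ψ₁, Ψ₂, Ψ₃} is a basis of the space of symmetric 2×2 matrices. -/
import Mathlib
open Matrix

private lemma vmv_mulVec (u v w : Fin 2 → ℝ) :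
    (Matrix.vecMulVec u v).mulVec w = (v ⬝ᵥ w) • u := by
  funext i
  simp [Matrix.vecMulVec, Matrix.mulVec, dotProduct, Fin.sum_univ_two]
  ring

private lemma key_val (t : Fin 3 → Fin 2 → ℝ) (n : Fin 3 → Fin 2 → ℝ)
    (Ψ : Fin 3 → Matrix (Fin 2) (Fin 2) ℝ)
    (hΨ : ∀ i : Fin 3, Ψ i =
      ((2:ℝ) * (n i ⬝ᵥ t (i + 2)) * (n i ⬝ᵥ t (i + 1)))⁻¹ •
        (Matrix.vecMulVec (t (i + 1)) (t (i + 2)) +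
          Matrix.vecMulVec (t (i + 2)) (t (i + 1)))) (i j : Fin 3) :
    n j ⬝ᵥ (Ψ i).mulVec (n j) =
      ((2:ℝ) * (n i ⬝ᵥ t (i + 2)) * (n i ⬝ᵥ t (i + 1)))⁻¹ *
        (2 * (n j ⬝ᵥ t (i + 1)) * (n j ⬝ᵥ t (i + 2))) := by
  rw [hΨ i, Matrix.smul_mulVec, Matrix.add_mulVec, vmv_mulVec, vmv_mulVec,
    dotProduct_smul]
  simp only [dotProduct_add, dotProduct_smul, smul_eq_mul]
  rw [dotProduct_comm (t (i+2)) (n j), dotProduct_comm (t (i+1)) (n j)]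
  ring

set_option maxHeartbeats 3200000 in
theorem stmt_12 (ℓ : Fin 3 → ℝ) (t : Fin 3 → Fin 2 → ℝ)
    (hℓ : ∀ i, 0 < ℓ i) (hunit : ∀ i, t i ⬝ᵥ t i = 1)
    (hclosed : ∑ i : Fin 3, ℓ i • t i = 0)
    (n : Fin 3 → Fin 2 → ℝ) (hn : ∀ i, n i = ![t i 1, -(t i 0)])
    (hnd : ∀ i : Fin 3, n i ⬝ᵥ t (i + 1) ≠ 0 ∧ n i ⬝ᵥ t (i + 2) ≠ 0)
    (Ψ : Fin 3 → Matrix (Fin 2) (Fin 2) ℝ)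
    (hΨ : ∀ i : Fin 3, Ψ i =
      ((2:ℝ) * (n i ⬝ᵥ t (i + 2)) * (n i ⬝ᵥ t (i + 1)))⁻¹ •
        (Matrix.vecMulVec (t (i + 1)) (t (i + 2)) +
          Matrix.vecMulVec (t (i + 2)) (t (i + 1)))) :
    (∀ i j : Fin 3, n j ⬝ᵥ (Ψ i).mulVec (n j) = if i = j then 1 else 0) ∧
    LinearIndependent ℝ Ψ ∧
    (∀ S : Matrix (Fin 2) (Fin 2) ℝ, S.IsSymm →
      ∃ c : Fin 3 → ℝ, S = ∑ i : Fin 3, c i • Ψ i) := by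
  have hz : ∀ k : Fin 3, n k ⬝ᵥ t k = 0 := by
    intro k; rw [hn k]; simp [dotProduct, Fin.sum_univ_two]; ring
  have key : ∀ i j : Fin 3, n j ⬝ᵥ (Ψ i).mulVec (n j) = if i = j then 1 else 0 := by
    intro i j
    rw [key_val t n Ψ hΨ i j]
    by_cases h : i = j
    · subst h
      simp only [if_pos rfl]
      rw [show (2:ℝ) * (n i ⬝ᵥ t (i + 1)) * (n i ⬝ᵥ t (i + 2))
          = 2 * (n i ⬝ᵥ t (i + 2)) * (n i ⬝ᵥ t (i + 1)) from by ring,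
        inv_mul_cancel₀ (mul_ne_zero (mul_ne_zero two_ne_zero (hnd i).2) (hnd i).1)]
      simp
    · simp only [if_neg h]
      have hj : j = i + 1 ∨ j = i + 2 := by
        revert h; fin_cases i <;> fin_cases j <;> decide
      rcases hj with hj | hj <;> (subst hj; rw [hz]; ring)
  refine ⟨key, ?_, ?_⟩
  · rw [Fintype.linearIndependent_iff]
    intro g hg j
    have h := congrArg (fun M => n j ⬝ᵥ M.mulVec (n j)) hg
    simp only [Fin.sum_univ_three, Matrix.add_mulVec, Matrix.smul_mulVec,
      dotProduct_add, dotProduct_smul, smul_eq_mul, Matrix.zero_mulVec,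
      dotProduct_zero] at h
    rw [key 0 j, key 1 j, key 2 j] at h
    fin_cases j <;> simpa using h
  · intro S hS
    refine ⟨fun i => n i ⬝ᵥ S.mulVec (n i), ?_⟩
    set T := ∑ i : Fin 3, (n i ⬝ᵥ S.mulVec (n i)) • Ψ i with hT
    have hTval : ∀ j, n j ⬝ᵥ T.mulVec (n j) = n j ⬝ᵥ S.mulVec (n j) := by
      intro j
      simp only [hT, Fin.sum_univ_three, Matrix.add_mulVec, Matrix.smul_mulVec,
        dotProduct_add, dotProduct_smul, smul_eq_mul]
      rw [key 0 j, key 1 j, key 2 j]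
      fin_cases j <;> simp
    have hΨsym : ∀ i, (Ψ i) 1 0 = (Ψ i) 0 1 := by
      intro i
      rw [hΨ i]
      simp only [Matrix.smul_apply, Matrix.add_apply, Matrix.vecMulVec_apply, smul_eq_mul]
      ring
    have hTsym : T 1 0 = T 0 1 := by
      simp only [hT, Fin.sum_univ_three, Matrix.add_apply, Matrix.smul_apply, smul_eq_mul,
        hΨsym]
    have hsym : S 1 0 = S 0 1 := by
      have := congrFun (congrFun hS 0) 1
      simpa using this
    have E : ∀ j : Fin 3, t j 1 * t j 1 * (S 0 0 - T 0 0)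
        - 2 * (t j 0 * t j 1) * (S 0 1 - T 0 1)
        + t j 0 * t j 0 * (S 1 1 - T 1 1) = 0 := by
      intro j
      have h := hTval j
      rw [hn j] at h
      simp only [Matrix.mulVec, dotProduct, Fin.sum_univ_two, Matrix.cons_val_zero,
        Matrix.cons_val_one, Matrix.head_cons] at h
      rw [hsym, hTsym] at h
      linear_combination -h
    have hc01 : t 0 1 * t 1 0 - t 0 0 * t 1 1 ≠ 0 := by
      have h := (hnd 0).1
      intro h'
      apply h
      simp [hn, dotProduct, Fin.sum_univ_two]
      linarith
    have hc02 : t 0 1 * t 2 0 - t 0 0 * t 2 1 ≠ 0 := by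
      have h := (hnd 0).2
      intro h'
      apply h
      simp [hn, dotProduct, Fin.sum_univ_two]
      linarith
    have hc12 : t 1 1 * t 2 0 - t 1 0 * t 2 1 ≠ 0 := by
      have h := (hnd 1).1
      intro h'
      apply h
      simp [hn, dotProduct, Fin.sum_univ_two]
      linarith
    have hdet : (-2 : ℝ) * (t 0 1 * t 1 0 - t 0 0 * t 1 1) * (t 0 1 * t 2 0 - t 0 0 * t 2 1)
        * (t 1 1 * t 2 0 - t 1 0 * t 2 1) ≠ 0 := by
      apply mul_ne_zero (mul_ne_zero (mul_ne_zero (by norm_num) hc01) hc02) hc12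
    have h00 : S 0 0 = T 0 0 := by
      have h : (S 0 0 - T 0 0) * ((-2 : ℝ) * (t 0 1 * t 1 0 - t 0 0 * t 1 1)
          * (t 0 1 * t 2 0 - t 0 0 * t 2 1) * (t 1 1 * t 2 0 - t 1 0 * t 2 1)) = 0 := by
        linear_combination (-2 * t 1 0 * t 2 0 * (t 1 1 * t 2 0 - t 1 0 * t 2 1)) * E 0
          + (2 * t 0 0 * t 2 0 * (t 0 1 * t 2 0 - t 0 0 * t 2 1)) * E 1
          + (-2 * t 0 0 * t 1 0 * (t 0 1 * t 1 0 - t 0 0 * t 1 1)) * E 2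
      have := mul_eq_zero.mp h
      rcases this with h' | h'
      · linarith [sub_eq_zero.mp h']
      · exact absurd h' hdet
    have h01 : S 0 1 = T 0 1 := by
      have h : (S 0 1 - T 0 1) * ((-2 : ℝ) * (t 0 1 * t 1 0 - t 0 0 * t 1 1)
          * (t 0 1 * t 2 0 - t 0 0 * t 2 1) * (t 1 1 * t 2 0 - t 1 0 * t 2 1)) = 0 := by
        linear_combination (-(t 1 1 * t 2 0 - t 1 0 * t 2 1) * (t 1 1 * t 2 0 + t 1 0 * t 2 1)) * E 0
          + ((t 0 1 * t 2 0 - t 0 0 * t 2 1) * (t 0 1 * t 2 0 + t 0 0 * t 2 1)) * E 1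
          + (-(t 0 1 * t 1 0 - t 0 0 * t 1 1) * (t 0 1 * t 1 0 + t 0 0 * t 1 1)) * E 2
      have := mul_eq_zero.mp h
      rcases this with h' | h'
      · linarith [sub_eq_zero.mp h']
      · exact absurd h' hdet
    have h11 : S 1 1 = T 1 1 := by
      have h : (S 1 1 - T 1 1) * ((-2 : ℝ) * (t 0 1 * t 1 0 - t 0 0 * t 1 1)
          * (t 0 1 * t 2 0 - t 0 0 * t 2 1) * (t 1 1 * t 2 0 - t 1 0 * t 2 1)) = 0 := by
        linear_combination (-2 * t 1 1 * t 2 1 * (t 1 1 * t 2 0 - t 1 0 * t 2 1)) * E 0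
          + (2 * t 0 1 * t 2 1 * (t 0 1 * t 2 0 - t 0 0 * t 2 1)) * E 1
          + (-2 * t 0 1 * t 1 1 * (t 0 1 * t 1 0 - t 0 0 * t 1 1)) * E 2
      have := mul_eq_zero.mp h
      rcases this with h' | h'
      · linarith [sub_eq_zero.mp h']
      · exact absurd h' hdet
    ext p q
    fin_cases p <;> fin_cases q
    · exact h00
    · exact h01
    · show S 1 0 = T 1 0
      rw [hsym, hTsym]; exact h01
    · exact h11
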